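/- Let a ≥ 0 and let ρ be the largest root of x^3 - ax^2 - (a+3)x - 1. The element γ = (-4-a + (-1-2a)ρ + 2ρ^2)·(-(a+2) - aρ + ρ^2) is a root of the polynomial x^3 - (a^2+3a+9)x^2 + 2(a^2+3a+9)x - (a^2+3a+9), and all three roots of this polynomial are positive real numbers. -/

import Mathlib

/-!
The substitution `ρ ↦ aρ + a + 2 - ρ²` (that is, `ρ ↦ -1 - 1/ρ`) permutes the roots of the simplest
cubic `f = X³ - aX² - (a+3)X - 1`, and modulo `f(ρ)` the element `γ` equals `σ² + σ + 1` for the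
conjugate `σ = aρ + a + 2 - ρ²`. The cubic `P = X³ - mX² + 2mX - m`, with `m = a² + 3a + 9`,
satisfies `P(x² + x + 1) = f(x) · (x³ + (a+3)x² + ax - 1)`, so `P(γ) = 0`. Finally `4m = (2a+3)² + 27`
is positive, and for `x ≤ 0` every term of `P(x)` but `-m` is `≤ 0`, so the real roots of `P` are
positive.
-/

section SimplestCubic

variable {R : Type*} [CommRing R] {a ρ : R}

theorem simplestCubic_root_conj (hρ : ρ^3 - a*ρ^2 - (a+3)*ρ - 1 = 0) :
    (a*ρ + a + 2 - ρ^2)^3 - a*(a*ρ + a + 2 - ρ^2)^2 - (a+3)*(a*ρ + a + 2 - ρ^2) - 1 = 0 := by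
  linear_combination (-ρ^3 + 2*a*ρ^2 + (3 + a - a^2)*ρ - a^2 - 3*a - 1) * hρ

theorem simplestCubic_codifferent_eq (hρ : ρ^3 - a*ρ^2 - (a+3)*ρ - 1 = 0) :
    (-4 - a + (-1 - 2*a)*ρ + 2*ρ^2) * (-(a+2) - a*ρ + ρ^2) =
      (a*ρ + a + 2 - ρ^2)^2 + (a*ρ + a + 2 - ρ^2) + 1 := by
  linear_combination (ρ - 1 - a) * hρ

theorem simplestCubic_root_sq_add_add_one (hρ : ρ^3 - a*ρ^2 - (a+3)*ρ - 1 = 0) :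
    (ρ^2 + ρ + 1)^3 - (a^2 + 3*a + 9)*(ρ^2 + ρ + 1)^2 + 2*(a^2 + 3*a + 9)*(ρ^2 + ρ + 1)
      - (a^2 + 3*a + 9) = 0 := by
  linear_combination (ρ^3 + (a+3)*ρ^2 + a*ρ - 1) * hρ

end SimplestCubic

section Positivity

variable {R : Type*} [CommRing R] [LinearOrder R] [IsStrictOrderedRing R]

theorem sq_add_three_mul_add_nine_pos (a : R) : 0 < a^2 + 3*a + 9 := by
  nlinarith [sq_nonneg (2*a + 3)]

theorem pos_of_cubic_root {m x : R} (hm : 0 < m) (hx : x^3 - m*x^2 + 2*m*x - m = 0) : 0 < x := by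
  by_contra! hx_nonpos
  nlinarith [mul_nonpos_of_nonpos_of_nonneg hx_nonpos (sq_nonneg x),
    mul_nonneg hm.le (sq_nonneg x), mul_nonpos_of_nonneg_of_nonpos hm.le hx_nonpos]

end Positivity

theorem simplest_cubic_codifferent_minpoly_general (a : ℤ) (ρ : ℝ)
    (hρ : ρ^3 - a*ρ^2 - (a+3)*ρ - 1 = 0) :
    let γ : ℝ := (-4 - a + (-1 - 2*a)*ρ + 2*ρ^2) * (-(a+2) - a*ρ + ρ^2)
    (γ^3 - (a^2 + 3*a + 9)*γ^2 + 2*(a^2 + 3*a + 9)*γ - (a^2 + 3*a + 9) = 0) ∧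
    (∀ x : ℝ, x^3 - (a^2 + 3*a + 9)*x^2 + 2*(a^2 + 3*a + 9)*x - (a^2 + 3*a + 9) = 0
      → 0 < x) := by
  intro γ
  have hγ : γ = _ := simplestCubic_codifferent_eq hρ
  refine ⟨?_, fun x hx ↦ pos_of_cubic_root (sq_add_three_mul_add_nine_pos (a : ℝ)) hx⟩
  rw [hγ]
  exact simplestCubic_root_sq_add_add_one (simplestCubic_root_conj hρ)

theorem simplest_cubic_codifferent_minpoly (a : ℤ) (ha : 0 ≤ a) (ρ : ℝ)
    (hρ : ρ^3 - a*ρ^2 - (a+3)*ρ - 1 = 0) :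
    let γ : ℝ := (-4 - a + (-1 - 2*a)*ρ + 2*ρ^2) * (-(a+2) - a*ρ + ρ^2)
    (γ^3 - (a^2 + 3*a + 9)*γ^2 + 2*(a^2 + 3*a + 9)*γ - (a^2 + 3*a + 9) = 0) ∧
    (∀ x : ℝ, x^3 - (a^2 + 3*a + 9)*x^2 + 2*(a^2 + 3*a + 9)*x - (a^2 + 3*a + 9) = 0
      → 0 < x) :=
  simplest_cubic_codifferent_minpoly_general a ρ hρ
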